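/- Let N₀ ∈ ℕ and C > 0. If a sequence of complex numbers (F_N)_{N∈ℕ} satisfies (i) lim_{N→∞} |F_N|^{1/N} = 0, and (ii) |F_N| ≤ C ∑_{k=N+1}^∞ |F_k| for all N ≥ N₀, then there exists N₁ ∈ ℕ such that F_N = 0 for all N ≥ N₁. -/

import Mathlib

open Complex MeasureTheory Polynomial Set Filter Topology
open scoped ENNReal

noncomputable section

/-- The inner product `⟨g,h⟩_μ = ∫ g · conj h dμ`. -/
def mInner (μ : Measure ℂ) (g h : ℂ → ℂ) : ℂ :=
  ∫ ζ, g ζ * (starRingEnd ℂ) (h ζ) ∂μ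

/-- The support of a Borel measure on ℂ. -/
def measSupport (μ : Measure ℂ) : Set ℂ :=
  {z | ∀ U ∈ 𝓝 z, μ U ≠ 0}

/-- `μ ∈ M(E)`: a finite positive Borel measure with infinite support contained in `E`. -/
def MeasClass (E : Set ℂ) (μ : Measure ℂ) : Prop :=
  IsFiniteMeasure μ ∧ measSupport μ ⊆ E ∧ (measSupport μ).Infinite

/-- `p` is the sequence of orthonormal polynomials of `μ` (degree `n`, positive
leading coefficient, orthonormal). -/
def IsONPolys (μ : Measure ℂ) (p : ℕ → Polynomial ℂ) : Prop :=
  (∀ n, (p n).natDegree = n) ∧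
  (∀ n, ∃ κ : ℝ, 0 < κ ∧ (p n).leadingCoeff = (κ : ℂ)) ∧
  (∀ n₁ n₂, mInner μ (fun z => (p n₁).eval z) (fun z => (p n₂).eval z)
      = if n₁ = n₂ then 1 else 0)

/-- The second type functions `s_n(z) = ∫ conj(p_n(ζ))/(z-ζ) dμ(ζ)`. -/
def sFun (μ : Measure ℂ) (p : ℕ → Polynomial ℂ) (n : ℕ) (z : ℂ) : ℂ :=
  ∫ ζ, (starRingEnd ℂ) ((p n).eval ζ) / (z - ζ) ∂μ

/-- `Φ` is the exterior conformal map of `E` : a holomorphic bijection of `ℂ∖E` onto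
the exterior of the closed unit disk with `Φ(z)/z → c > 0` at infinity. -/
def IsExtConfMap (E : Set ℂ) (Φ : ℂ → ℂ) : Prop :=
  DifferentiableOn ℂ Φ Eᶜ ∧
  Set.BijOn Φ Eᶜ {w : ℂ | 1 < norm w} ∧
  ∃ c : ℝ, 0 < c ∧
    Filter.Tendsto (fun z => Φ z / z) (Bornology.cobounded ℂ) (𝓝 (c : ℂ))

/-- The canonical domain of (extended real) index `r` :
`D_r = E ∪ {z ∉ E : |Φ(z)| < r}`. -/
def Dcan (E : Set ℂ) (Φ : ℂ → ℂ) (r : ℝ≥0∞) : Set ℂ :=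
  E ∪ {z | z ∉ E ∧ ENNReal.ofReal (norm (Φ z)) < r}

/-- The level curve `Γ_ρ = {z : |Φ(z)| = ρ}`. -/
def levCurve (E : Set ℂ) (Φ : ℂ → ℂ) (ρ : ℝ) : Set ℂ :=
  {z | z ∉ E ∧ norm (Φ z) = ρ}

/-- `f ∈ H(E)` : `f` is holomorphic on some open neighborhood of `E`. -/
def HoloNhd (E : Set ℂ) (f : ℂ → ℂ) : Prop :=
  ∃ U, IsOpen U ∧ E ⊆ U ∧ DifferentiableOn ℂ f U

/-- `f` and `g` agree on some open neighborhood of `E`. -/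
def AgreesNear (E : Set ℂ) (f g : ℂ → ℂ) : Prop :=
  ∃ U, IsOpen U ∧ E ⊆ U ∧ Set.EqOn f g U

/-- `f` (holomorphic near `E`) admits a holomorphic extension to the set `D`. -/
def ExtHolo (E : Set ℂ) (f : ℂ → ℂ) (D : Set ℂ) : Prop :=
  ∃ g, DifferentiableOn ℂ g D ∧ AgreesNear E f g

/-- `f` extends to `D_ρ` meromorphically with at most `m` poles counting
multiplicities (i.e. some monic polynomial `q` of degree `≤ m` kills the poles). -/
def MeroExtTo (E : Set ℂ) (Φ : ℂ → ℂ) (f : ℂ → ℂ) (m : ℕ) (ρ : ℝ) : Prop :=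
  ∃ q : Polynomial ℂ, q.Monic ∧ q.natDegree ≤ m ∧
    ExtHolo E (fun z => q.eval z * f z) (Dcan E Φ (ENNReal.ofReal ρ))

/-- `ρ_m(f)` : the index of the largest canonical domain to which `f` extends
meromorphically with at most `m` poles. -/
def rhoM (E : Set ℂ) (Φ : ℂ → ℂ) (f : ℂ → ℂ) (m : ℕ) : ℝ≥0∞ :=
  sSup {r | ∃ ρ : ℝ, 1 < ρ ∧ r = ENNReal.ofReal ρ ∧ MeroExtTo E Φ f m ρ}

/-- `ρ_0(f)`. -/
def rho0 (E : Set ℂ) (Φ : ℂ → ℂ) (f : ℂ → ℂ) : ℝ≥0∞ := rhoM E Φ f 0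

/-- `μ ∈ Reg₁(E)` : `|p_n(z)|^{1/n} → |Φ(z)|` uniformly on compact subsets of `ℂ∖E`. -/
def Reg1 (E : Set ℂ) (Φ : ℂ → ℂ) (μ : Measure ℂ) (p : ℕ → Polynomial ℂ) : Prop :=
  ∀ K : Set ℂ, IsCompact K → K ⊆ Eᶜ →
    TendstoUniformlyOn (fun n z => norm ((p n).eval z) ^ (1 / (n : ℝ)))
      (fun z => norm (Φ z)) Filter.atTop K

/-- `μ ∈ Reg₂(E)` : `|s_n(z)|^{1/n} → |Φ(z)|⁻¹` uniformly on compact subsets of `ℂ∖E`. -/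
def Reg2 (E : Set ℂ) (Φ : ℂ → ℂ) (μ : Measure ℂ) (p : ℕ → Polynomial ℂ) : Prop :=
  ∀ K : Set ℂ, IsCompact K → K ⊆ Eᶜ →
    TendstoUniformlyOn (fun n z => norm (sFun μ p n z) ^ (1 / (n : ℝ)))
      (fun z => (norm (Φ z))⁻¹) Filter.atTop K

/-- `μ ∈ Reg_{1,2}(E)`. -/
def Reg12 (E : Set ℂ) (Φ : ℂ → ℂ) (μ : Measure ℂ) (p : ℕ → Polynomial ℂ) : Prop :=
  Reg1 E Φ μ p ∧ Reg2 E Φ μ p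

/-- `μ ∈ Reg_{1,2}^m(E)` : additionally `κ_{n-m}/κ_n ≥ c > 0` for all large `n`. -/
def Reg12m (E : Set ℂ) (Φ : ℂ → ℂ) (μ : Measure ℂ) (p : ℕ → Polynomial ℂ) (m : ℕ) : Prop :=
  Reg12 E Φ μ p ∧ ∃ c : ℝ, 0 < c ∧ ∃ n₀ : ℕ, ∀ n ≥ n₀,
    c ≤ norm ((p (n - m)).leadingCoeff) / norm ((p n).leadingCoeff)

/-- A denominator of an `(n,m)` orthogonal Hermite–Padé approximant of the system `F`. -/
def IsHPDenom {ι : Type*} [Fintype ι] (μ : Measure ℂ) (p : ℕ → Polynomial ℂ)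
    (F : ι → ℂ → ℂ) (m : ι → ℕ) (n : ℕ) (Q : Polynomial ℂ) : Prop :=
  Q.Monic ∧ Q.natDegree ≤ ∑ i, m i ∧
  ∀ i, ∀ k < m i,
    mInner μ (fun z => Q.eval z * z ^ k * F i z) (fun z => (p n).eval z) = 0

/-- The numerator `P^μ_{n,m,k,i}` associated to a denominator `Q`. -/
def IsHPNum (μ : Measure ℂ) (p : ℕ → Polynomial ℂ) (Q : Polynomial ℂ) (f : ℂ → ℂ)
    (k n : ℕ) (P : Polynomial ℂ) : Prop :=
  P.degree < (n : WithBot ℕ) ∧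
  ∀ j ≤ n, mInner μ (fun z => Q.eval z * z ^ k * f z - P.eval z)
      (fun z => (p j).eval z) = 0

/-- A denominator of an `(n,m,m*)` incomplete orthogonal Padé approximant of `f`. -/
def IsIncDenom (μ : Measure ℂ) (p : ℕ → Polynomial ℂ) (f : ℂ → ℂ)
    (m mstar n : ℕ) (Q : Polynomial ℂ) : Prop :=
  Q.Monic ∧ Q.natDegree ≤ m ∧
  ∀ k < mstar, mInner μ (fun z => Q.eval z * z ^ k * f z) (fun z => (p n).eval z) = 0

/-- The coefficient norm `‖∑ a_k z^k‖ = ∑ |a_k|` of a polynomial. -/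
def coeffNorm (Q : Polynomial ℂ) : ℝ :=
  ∑ k ∈ Finset.range (Q.natDegree + 1), norm (Q.coeff k)

/-- `limsup_n a_n^{1/n}` computed in `ℝ≥0∞`. -/
def limsupRoot (a : ℕ → ℝ) : ℝ≥0∞ :=
  Filter.limsup (fun n => ENNReal.ofReal (a n ^ (1 / (n : ℝ)))) Filter.atTop

/-- The sup norm of `f` on `K`. -/
def supNorm (f : ℂ → ℂ) (K : Set ℂ) : ℝ :=
  sSup ((fun z => norm (f z)) '' K)

-- `‖Φ‖_K`, replaced by `1` when `K ⊆ E`.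
open scoped Classical in
def phiNormK (E : Set ℂ) (Φ : ℂ → ℂ) (K : Set ℂ) : ℝ :=
  if K ⊆ E then 1 else supNorm Φ K

/-- `g` has a pole of exact order `t` at `ξ`. -/
def IsPoleOrd (g : ℂ → ℂ) (ξ : ℂ) (t : ℕ) : Prop :=
  ∃ h : ℂ → ℂ, (∃ V, IsOpen V ∧ ξ ∈ V ∧ DifferentiableOn ℂ h V) ∧ h ξ ≠ 0 ∧
    ∀ᶠ z in 𝓝[≠] ξ, g z = h z / (z - ξ) ^ t

/-- `g` is holomorphic on a neighborhood of the closure of `D_{|Φ(ξ)|}` except for a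
pole at `ξ` of exact order `t`. -/
def HoloExceptPole (E : Set ℂ) (Φ : ℂ → ℂ) (g : ℂ → ℂ) (ξ : ℂ) (t : ℕ) : Prop :=
  ∃ U, IsOpen U ∧ closure (Dcan E Φ (ENNReal.ofReal (norm (Φ ξ)))) ⊆ U ∧
    DifferentiableOn ℂ g (U \ {ξ}) ∧ IsPoleOrd g ξ t

/-- `g` extends a polynomial combination `∑ vᵢ Fᵢ`, `deg vᵢ < mᵢ`, of the system `F`. -/
def IsCombExt {ι : Type*} [Fintype ι] (E : Set ℂ) (F : ι → ℂ → ℂ) (m : ι → ℕ)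
    (g : ℂ → ℂ) : Prop :=
  ∃ v : ι → Polynomial ℂ, (∀ i, (v i).degree < (m i : WithBot ℕ)) ∧
    AgreesNear E (fun z => ∑ i, (v i).eval z * F i z) g

/-- For each `t = 1,…,τ` there is a polynomial combination with a pole of exact order
`t` at `ξ`, holomorphic elsewhere on a neighborhood of `closure D_{|Φ(ξ)|}`. -/
def SysAll {ι : Type*} [Fintype ι] (E : Set ℂ) (Φ : ℂ → ℂ) (F : ι → ℂ → ℂ)
    (m : ι → ℕ) (ξ : ℂ) (τ : ℕ) : Prop :=
  ∀ t, 1 ≤ t → t ≤ τ → ∃ g, IsCombExt E F m g ∧ HoloExceptPole E Φ g ξ t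

/-- `ξ` is a system pole of order `τ` of `F` with respect to `m`. -/
def IsSystemPoleOrd {ι : Type*} [Fintype ι] (E : Set ℂ) (Φ : ℂ → ℂ) (F : ι → ℂ → ℂ)
    (m : ι → ℕ) (ξ : ℂ) (τ : ℕ) : Prop :=
  0 < τ ∧ SysAll E Φ F m ξ τ ∧ ¬ SysAll E Φ F m ξ (τ + 1)

/-- `S` is the set of system poles of `F` w.r.t. `m` and `ord` gives their orders. -/
def SystemPoleData {ι : Type*} [Fintype ι] (E : Set ℂ) (Φ : ℂ → ℂ) (F : ι → ℂ → ℂ)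
    (m : ι → ℕ) (S : Finset ℂ) (ord : ℂ → ℕ) : Prop :=
  (∀ ξ, ξ ∈ S ↔ ∃ τ, IsSystemPoleOrd E Φ F m ξ τ) ∧
  ∀ ξ ∈ S, IsSystemPoleOrd E Φ F m ξ (ord ξ)

/-- `F` has exactly `k` system poles with respect to `m`, counting multiplicities. -/
def HasExactlySysPoles {ι : Type*} [Fintype ι] (E : Set ℂ) (Φ : ℂ → ℂ) (F : ι → ℂ → ℂ)
    (m : ι → ℕ) (k : ℕ) : Prop :=
  ∃ S ord, SystemPoleData E Φ F m S ord ∧ ∑ ξ ∈ S, ord ξ = k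

/-- `ρ_{ξ,t}(F,m)` : the largest of the numbers `ρ_t(g)` over polynomial combinations
`g` with a pole of exact order `t` at `ξ`. -/
def rhoXiT {ι : Type*} [Fintype ι] (E : Set ℂ) (Φ : ℂ → ℂ) (F : ι → ℂ → ℂ)
    (m : ι → ℕ) (ξ : ℂ) (t : ℕ) : ℝ≥0∞ :=
  sSup {r | ∃ g, IsCombExt E F m g ∧ HoloExceptPole E Φ g ξ t ∧ r = rhoM E Φ g t}

/-- `𝛒_{ξ,t}(F,m) = min_{k=1,…,t} ρ_{ξ,k}(F,m)`. -/
def rhoBold {ι : Type*} [Fintype ι] (E : Set ℂ) (Φ : ℂ → ℂ) (F : ι → ℂ → ℂ)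
    (m : ι → ℕ) (ξ : ℂ) (t : ℕ) : ℝ≥0∞ :=
  ⨅ k ∈ Finset.Icc 1 t, rhoXiT E Φ F m ξ k

/-- Meromorphic data for `f` on `D_r` : poles `P` with orders `po`, holomorphic `H`
with `(∏_{ξ∈P}(z-ξ)^{po ξ}) f = H` and `H ξ ≠ 0` at each pole (exact orders). -/
def MeroDataOn (E : Set ℂ) (Φ : ℂ → ℂ) (f : ℂ → ℂ) (r : ℝ≥0∞)
    (P : Finset ℂ) (po : ℂ → ℕ) (H : ℂ → ℂ) : Prop :=
  ↑P ⊆ Dcan E Φ r \ E ∧ (∀ ξ ∈ P, 0 < po ξ) ∧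
  DifferentiableOn ℂ H (Dcan E Φ r) ∧ (∀ ξ ∈ P, H ξ ≠ 0) ∧
  AgreesNear E (fun z => (∏ ξ ∈ P, (z - ξ) ^ po ξ) * f z) H

/-- `ξ` is a pole of exact order `t` of the meromorphic continuation of `f`. -/
def IsPoleOfExt (E : Set ℂ) (Φ : ℂ → ℂ) (f : ℂ → ℂ) (ξ : ℂ) (t : ℕ) : Prop :=
  ∃ ρ : ℝ, 1 < ρ ∧ ∃ P po H, MeroDataOn E Φ f (ENNReal.ofReal ρ) P po H ∧ ξ ∈ P ∧ po ξ = t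

/-- The canonical domain of index `ρ` is one where all poles of `z^k Fᵢ` are system
poles whose order as poles does not exceed their order as system poles, and `z^k Fᵢ`
has no other singularities. -/
def GoodIdx {ι : Type*} [Fintype ι] (E : Set ℂ) (Φ : ℂ → ℂ) (F : ι → ℂ → ℂ)
    (m : ι → ℕ) (i : ι) (k : ℕ) (ρ : ℝ) : Prop :=
  ∃ P po H, MeroDataOn E Φ (fun z => z ^ k * F i z) (ENNReal.ofReal ρ) P po H ∧
    ∀ ξ ∈ P, ∃ τ, IsSystemPoleOrd E Φ F m ξ τ ∧ po ξ ≤ τ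

/-- `ρ_{i,k}(F,m)`. -/
def rhoIK {ι : Type*} [Fintype ι] (E : Set ℂ) (Φ : ℂ → ℂ) (F : ι → ℂ → ℂ)
    (m : ι → ℕ) (i : ι) (k : ℕ) : ℝ≥0∞ :=
  sSup {r | ∃ ρ : ℝ, 1 < ρ ∧ r = ENNReal.ofReal ρ ∧ GoodIdx E Φ F m i k ρ}

/-- The meromorphic extension of `f` to `D_{ρ_k(f)}` has exactly `k` poles counting
multiplicities (the minimal degree of a monic denominator is `k`). -/
def ExactPoles (E : Set ℂ) (Φ : ℂ → ℂ) (f : ℂ → ℂ) (k : ℕ) : Prop :=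
  (∃ q : Polynomial ℂ, q.Monic ∧ q.natDegree = k ∧
    ExtHolo E (fun z => q.eval z * f z) (Dcan E Φ (rhoM E Φ f k))) ∧
  ∀ q : Polynomial ℂ, q.Monic →
    ExtHolo E (fun z => q.eval z * f z) (Dcan E Φ (rhoM E Φ f k)) → k ≤ q.natDegree

/-- `F` is polynomially independent with respect to `m`. -/
def PolyIndep {ι : Type*} [Fintype ι] (E : Set ℂ) (F : ι → ℂ → ℂ) (m : ι → ℕ) : Prop :=
  ¬ ∃ v : ι → Polynomial ℂ, (∀ i, (v i).degree < (m i : WithBot ℕ)) ∧ (∃ i, v i ≠ 0) ∧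
    ∃ q : Polynomial ℂ, AgreesNear E (fun z => ∑ i, (v i).eval z * F i z)
      (fun z => q.eval z)

/-- `ξ` is a pole of the vector `G` of order `τ` (the largest order among components). -/
def VecPoleOrd {ι : Type*} [Fintype ι] (E : Set ℂ) (Φ : ℂ → ℂ) (G : ι → ℂ → ℂ)
    (ξ : ℂ) (τ : ℕ) : Prop :=
  (∃ i, IsPoleOfExt E Φ (G i) ξ τ) ∧ ∀ i t, IsPoleOfExt E Φ (G i) ξ t → t ≤ τ

/-- The vector `G` extends meromorphically to `D_ρ` with at most `k` poles counting
multiplicities (common monic denominator of degree `≤ k`). -/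
def VecMeroExtTo {ι : Type*} [Fintype ι] (E : Set ℂ) (Φ : ℂ → ℂ) (G : ι → ℂ → ℂ)
    (k : ℕ) (ρ : ℝ) : Prop :=
  ∃ q : Polynomial ℂ, q.Monic ∧ q.natDegree ≤ k ∧
    ∀ i, ExtHolo E (fun z => q.eval z * G i z) (Dcan E Φ (ENNReal.ofReal ρ))

/-- `ρ_k(G)` for a vector `G`. -/
def vecRhoM {ι : Type*} [Fintype ι] (E : Set ℂ) (Φ : ℂ → ℂ) (G : ι → ℂ → ℂ)
    (k : ℕ) : ℝ≥0∞ :=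
  sSup {r | ∃ ρ : ℝ, 1 < ρ ∧ r = ENNReal.ofReal ρ ∧ VecMeroExtTo E Φ G k ρ}

/-! Write `σ N = ∑_{k ≥ N} |F k|`. Hypothesis (ii) gives `σ N ≤ (1 + C) σ (N + 1)` for `N ≥ N₀`, so
`σ N₀ ≤ (1 + C) ^ j σ (N₀ + j)`: a nonzero tail cannot decay faster than `(1 + C)⁻¹ ^ j`. By (i),
however, `|F n| ≤ ε ^ n` eventually for every `ε > 0`, so `σ N = O(ε ^ N)`; any `ε < (1 + C)⁻¹`
forces `σ N₀ = 0`. -/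

lemma eventually_le_pow_of_tendsto_rpow_inv {a : ℕ → ℝ} (ha : ∀ n, 0 ≤ a n) {r ε : ℝ}
    (h : Tendsto (fun n => a n ^ (1 / (n : ℝ))) atTop (𝓝 r)) (hrε : r < ε) :
    ∀ᶠ n in atTop, a n ≤ ε ^ n := by
  filter_upwards [h.eventually_lt_const hrε, eventually_ne_atTop 0] with n hlt hn
  calc a n = (a n ^ (1 / (n : ℝ))) ^ n := by rw [one_div, Real.rpow_inv_natCast_pow (ha n) hn]
    _ ≤ ε ^ n := pow_le_pow_left₀ (Real.rpow_nonneg (ha n) _) hlt.le n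

lemma tsum_nat_add_le_of_le_geometric {a : ℕ → ℝ} (ha : ∀ n, 0 ≤ a n) {ε : ℝ} (hε₀ : 0 ≤ ε)
    (hε₁ : ε < 1) {n₀ : ℕ} (h : ∀ n ≥ n₀, a n ≤ ε ^ n) {N : ℕ} (hN : n₀ ≤ N) :
    ∑' k, a (N + k) ≤ ε ^ N / (1 - ε) := by
  have hgeom : HasSum (fun k => ε ^ (N + k)) (ε ^ N / (1 - ε)) := by
    simpa only [pow_add, div_eq_mul_inv] using
      (hasSum_geometric_of_lt_one hε₀ hε₁).mul_left (ε ^ N)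
  have hle : ∀ k, a (N + k) ≤ ε ^ (N + k) := fun k => h _ (by omega)
  exact hgeom.tsum_eq ▸
    (Summable.of_nonneg_of_le (fun k => ha _) hle hgeom.summable).tsum_le_tsum hle hgeom.summable

lemma tsum_nat_add_le_one_add_mul {a : ℕ → ℝ} (hs : Summable a) {C : ℝ} {N : ℕ}
    (h : a N ≤ C * ∑' k, a (N + 1 + k)) :
    ∑' k, a (N + k) ≤ (1 + C) * ∑' k, a (N + 1 + k) := by
  have hsN : Summable (fun k => a (N + k)) := hs.comp_injective (add_right_injective N)
  rw [hsN.tsum_eq_zero_add]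
  simp only [add_zero, ← add_assoc, add_right_comm N _ 1]
  linarith

lemma le_pow_mul_of_le_mul_succ {T : ℕ → ℝ} {c : ℝ} (hc : 0 ≤ c) {N₀ : ℕ}
    (h : ∀ N ≥ N₀, T N ≤ c * T (N + 1)) (j : ℕ) : T N₀ ≤ c ^ j * T (N₀ + j) := by
  induction j with
  | zero => simp
  | succ j ih =>
    calc T N₀ ≤ c ^ j * T (N₀ + j) := ih
      _ ≤ c ^ j * (c * T (N₀ + j + 1)) := by gcongr; exact h _ (by omega)
      _ = c ^ (j + 1) * T (N₀ + (j + 1)) := by ring_nf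

lemma eq_zero_of_le_mul_tsum_of_le_geometric {a : ℕ → ℝ} (ha : ∀ n, 0 ≤ a n) {ε : ℝ}
    (hε₀ : 0 ≤ ε) (hε₁ : ε < 1) {n₀ : ℕ} (hdecay : ∀ n ≥ n₀, a n ≤ ε ^ n) {C : ℝ} (hC : 0 ≤ 1 + C)
    (hCε : (1 + C) * ε < 1) {N₀ : ℕ} (h : ∀ N ≥ N₀, a N ≤ C * ∑' k, a (N + 1 + k)) :
    ∀ N ≥ N₀, a N = 0 := by
  have hs : Summable a := (summable_geometric_of_lt_one hε₀ hε₁).of_norm_bounded_eventually_nat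
    (eventually_atTop.2 ⟨n₀, fun n hn => (Real.norm_of_nonneg (ha n)).trans_le (hdecay n hn)⟩)
  have hgrowth (j : ℕ) : ∑' k, a (N₀ + k) ≤ (1 + C) ^ j * ∑' k, a (N₀ + j + k) :=
    le_pow_mul_of_le_mul_succ (T := fun N => ∑' k, a (N + k)) hC
      (fun N hN => tsum_nat_add_le_one_add_mul hs (h N hN)) j
  have hlim : Tendsto (fun j : ℕ => ε ^ N₀ / (1 - ε) * ((1 + C) * ε) ^ j) atTop (𝓝 0) := by
    simpa using (tendsto_pow_atTop_nhds_zero_of_lt_one (by positivity) hCε).const_mul _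
  have htail : ∑' k, a (N₀ + k) ≤ 0 := by
    refine ge_of_tendsto hlim (eventually_atTop.2 ⟨n₀, fun j hj => ?_⟩)
    calc ∑' k, a (N₀ + k) ≤ (1 + C) ^ j * ∑' k, a (N₀ + j + k) := hgrowth j
      _ ≤ (1 + C) ^ j * (ε ^ (N₀ + j) / (1 - ε)) := by
        gcongr; exact tsum_nat_add_le_of_le_geometric ha hε₀ hε₁ hdecay (by omega)
      _ = ε ^ N₀ / (1 - ε) * ((1 + C) * ε) ^ j := by rw [mul_pow, pow_add]; ring
  intro N hN
  obtain ⟨j, rfl⟩ := Nat.exists_eq_add_of_le hN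
  refine le_antisymm (le_trans ?_ htail) (ha _)
  exact (hs.comp_injective (add_right_injective N₀)).le_tsum j fun k _ => ha _

/-- Lemma 3 of [bosuwan1]. -/
theorem stmt_6 (N₀ : ℕ) (C : ℝ) (hC : 0 < C) (F : ℕ → ℂ)
    (h1 : Filter.Tendsto (fun N => norm (F N) ^ (1 / (N : ℝ)))
      Filter.atTop (𝓝 0))
    (h2 : ∀ N ≥ N₀, norm (F N) ≤ C * ∑' k : ℕ, norm (F (N + 1 + k))) :
    ∃ N₁ : ℕ, ∀ N ≥ N₁, F N = 0 := by
  have ha : ∀ n, 0 ≤ ‖F n‖ := fun n => norm_nonneg _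
  set ε : ℝ := 1 / (2 + C)
  have hε₀ : 0 < ε := by positivity
  have hε₁ : ε < 1 := by rw [div_lt_one (by linarith)]; linarith
  have hCε : (1 + C) * ε < 1 := by
    rw [← mul_div_assoc, mul_one, div_lt_one (by linarith)]; linarith
  obtain ⟨n₀, hn₀⟩ := (eventually_le_pow_of_tendsto_rpow_inv ha h1 hε₀).exists_forall_of_atTop
  exact ⟨N₀, fun N hN => norm_eq_zero.1 <|
    eq_zero_of_le_mul_tsum_of_le_geometric ha hε₀.le hε₁ hn₀ (by linarith) hCε h2 N hN⟩

end
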